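/- For all integers t > 2 and all positive integers m, the (t,2) broadcast domination number of the path graph on m vertices satisfies γ_{t,2}(G_{m,1}) ≤ ⌊(m + 2(t−1)) / (2(t−1))⌋. -/
import Mathlib


/-- The path graph on `m` vertices `{0,…,m−1}`, with `i ~ j` iff `|i − j| = 1`. -/
def pathGraph' (m : ℕ) : SimpleGraph (Fin m) :=
  SimpleGraph.fromRel (fun i j => (i : ℕ) + 1 = (j : ℕ))

/-- `S` is a `(t,2)` broadcast on `G`: every vertex receives total signal at least `2`,
where a tower `T` supplies signal `max (t - dist T v) 0` (here `ℕ`-subtraction truncates). -/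
def IsBroadcast {V : Type*} (G : SimpleGraph V) (t : ℕ) (S : Finset V) : Prop :=
  ∀ v : V, 2 ≤ ∑ T ∈ S, (t - G.dist T v)

/-- The `(t,2)` broadcast domination number: the minimum cardinality of a `(t,2)` broadcast. -/
noncomputable def broadcastNumber {V : Type*} (G : SimpleGraph V) (t : ℕ) : ℕ :=
  sInf {k | ∃ S : Finset V, IsBroadcast G t S ∧ S.card = k}

lemma pathGraph'_adj {m : ℕ} (i j : Fin m) (h : (i : ℕ) + 1 = (j : ℕ)) :
    (pathGraph' m).Adj i j := by
  refine ⟨?_, Or.inl h⟩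
  intro he
  rw [he] at h
  omega

lemma pathGraph'_walk {m : ℕ} (n : ℕ) (i j : Fin m) (h : (j : ℕ) = (i : ℕ) + n) :
    ∃ p : (pathGraph' m).Walk i j, p.length ≤ n := by
  induction n generalizing i with
  | zero =>
      have : i = j := Fin.ext (by omega)
      subst this
      exact ⟨SimpleGraph.Walk.nil, by simp⟩
  | succ n ih =>
      have hi1 : (i : ℕ) + 1 < m := by have := j.isLt; omega
      obtain ⟨p, hp⟩ := ih ⟨(i : ℕ) + 1, hi1⟩ (by simp; omega)
      exact ⟨SimpleGraph.Walk.cons (pathGraph'_adj i ⟨(i : ℕ) + 1, hi1⟩ rfl) p, by simpa using hp⟩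

lemma pathGraph'_dist_le {m : ℕ} (i j : Fin m) (e : ℕ)
    (h1 : (i : ℕ) - (j : ℕ) ≤ e) (h2 : (j : ℕ) - (i : ℕ) ≤ e) :
    (pathGraph' m).dist i j ≤ e := by
  rcases le_total (i : ℕ) (j : ℕ) with hle | hle
  · obtain ⟨p, hp⟩ := pathGraph'_walk ((j : ℕ) - (i : ℕ)) i j (by omega)
    exact le_trans (SimpleGraph.dist_le p) (by omega)
  · obtain ⟨p, hp⟩ := pathGraph'_walk ((i : ℕ) - (j : ℕ)) j i (by omega)
    rw [SimpleGraph.dist_comm]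
    exact le_trans (SimpleGraph.dist_le p) (by omega)

theorem gamma_t2_path_upper' (t m : ℕ) (ht : 2 < t) (hm : 0 < m) :
    broadcastNumber (pathGraph' m) t ≤ (m + 2 * (t - 1)) / (2 * (t - 1)) := by
  have hdpos : 0 < 2 * (t - 1) := by omega
  have hQlt : ∀ i : ℕ, min (t - 2 + i * (2 * (t - 1))) (m - 1) < m := fun i => by omega
  let Q : ℕ → Fin m := fun i => ⟨min (t - 2 + i * (2 * (t - 1))) (m - 1), hQlt i⟩
  have hQv : ∀ j : ℕ, ((Q j : Fin m) : ℕ) = min (t - 2 + j * (2 * (t - 1))) (m - 1) :=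
    fun j => rfl
  let S : Finset (Fin m) := (Finset.range (m / (2 * (t - 1)) + 1)).image Q
  have hmemQ : ∀ j : ℕ, j * (2 * (t - 1)) ≤ m → Q j ∈ S := by
    intro j hj
    exact Finset.mem_image_of_mem Q (Finset.mem_range.mpr
      (Nat.lt_succ_of_le ((Nat.le_div_iff_mul_le hdpos).mpr hj)))
  have hS : IsBroadcast (pathGraph' m) t S := by
    rintro ⟨x, hxm⟩
    by_cases hcase : x ≤ t - 2
    · -- single tower Q 0 suffices
      have hmem : Q 0 ∈ S := hmemQ 0 (by omega)
      have hdist : (pathGraph' m).dist (Q 0) ⟨x, hxm⟩ ≤ t - 2 := by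
        apply pathGraph'_dist_le <;> rw [hQv] <;> simp <;> omega
      have hsig : 2 ≤ t - (pathGraph' m).dist (Q 0) ⟨x, hxm⟩ := by omega
      calc 2 ≤ t - (pathGraph' m).dist (Q 0) ⟨x, hxm⟩ := hsig
        _ ≤ ∑ T ∈ S, (t - (pathGraph' m).dist T ⟨x, hxm⟩) :=
            Finset.single_le_sum (f := fun T => t - (pathGraph' m).dist T ⟨x, hxm⟩)
              (fun i _ => Nat.zero_le _) hmem
    · -- x ≥ t - 1
      push_neg at hcase
      obtain ⟨i, a, hia, halt⟩ :
          ∃ i a : ℕ, x - (t - 1) = i * (2 * (t - 1)) + a ∧ a < 2 * (t - 1) := by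
        refine ⟨(x - (t - 1)) / (2 * (t - 1)), (x - (t - 1)) % (2 * (t - 1)), ?_, ?_⟩
        · rw [mul_comm]
          exact (Nat.div_add_mod _ _).symm
        · exact Nat.mod_lt _ hdpos
      have hp1 : ((Q i : Fin m) : ℕ) = x - a - 1 := by rw [hQv]; omega
      by_cases hsmall : a ≤ t - 3
      · -- single tower Q i suffices
        have hmem : Q i ∈ S := hmemQ i (by omega)
        have hdist : (pathGraph' m).dist (Q i) ⟨x, hxm⟩ ≤ t - 2 := by
          apply pathGraph'_dist_le <;> rw [hp1] <;> simp <;> omega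
        have hsig : 2 ≤ t - (pathGraph' m).dist (Q i) ⟨x, hxm⟩ := by omega
        calc 2 ≤ t - (pathGraph' m).dist (Q i) ⟨x, hxm⟩ := hsig
          _ ≤ ∑ T ∈ S, (t - (pathGraph' m).dist T ⟨x, hxm⟩) :=
              Finset.single_le_sum (f := fun T => t - (pathGraph' m).dist T ⟨x, hxm⟩)
                (fun i _ => Nat.zero_le _) hmem
      · -- need two towers Q i and Q (i+1)
        push_neg at hsmall
        have hmem1 : Q i ∈ S := hmemQ i (by omega)
        have hmem2 : Q (i + 1) ∈ S := by
          apply hmemQ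
          have : (i + 1) * (2 * (t - 1)) = i * (2 * (t - 1)) + 2 * (t - 1) := by ring
          omega
        have hp2 : ((Q (i + 1) : Fin m) : ℕ) = min (t - 2 + (i + 1) * (2 * (t - 1))) (m - 1) :=
          hQv (i + 1)
        have hmul : (i + 1) * (2 * (t - 1)) = i * (2 * (t - 1)) + 2 * (t - 1) := by ring
        have hp2lo : x ≤ ((Q (i + 1) : Fin m) : ℕ) := by rw [hp2]; omega
        have hp2hi : ((Q (i + 1) : Fin m) : ℕ) ≤ x + (2 * (t - 1) - a - 1) := by
          rw [hp2]; omega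
        have hne : Q i ≠ Q (i + 1) := by
          intro hEq
          have : ((Q i : Fin m) : ℕ) = ((Q (i + 1) : Fin m) : ℕ) := by rw [hEq]
          omega
        have hdist1 : (pathGraph' m).dist (Q i) ⟨x, hxm⟩ ≤ a + 1 := by
          apply pathGraph'_dist_le <;> rw [hp1] <;> simp <;> omega
        have hdist2 : (pathGraph' m).dist (Q (i + 1)) ⟨x, hxm⟩ ≤ 2 * (t - 1) - a - 1 := by
          apply pathGraph'_dist_le <;> simp <;> omega
        have hsum : 2 ≤ (t - (pathGraph' m).dist (Q i) ⟨x, hxm⟩) +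
            (t - (pathGraph' m).dist (Q (i + 1)) ⟨x, hxm⟩) := by omega
        have hsubset : ({Q i, Q (i + 1)} : Finset (Fin m)) ⊆ S := by
          intro z hz
          rcases Finset.mem_insert.mp hz with h | h
          · exact h ▸ hmem1
          · exact (Finset.mem_singleton.mp h) ▸ hmem2
        calc 2 ≤ (t - (pathGraph' m).dist (Q i) ⟨x, hxm⟩) +
              (t - (pathGraph' m).dist (Q (i + 1)) ⟨x, hxm⟩) := hsum
          _ = ∑ T ∈ ({Q i, Q (i + 1)} : Finset (Fin m)),
              (t - (pathGraph' m).dist T ⟨x, hxm⟩) :=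
              (Finset.sum_pair (f := fun T => t - (pathGraph' m).dist T ⟨x, hxm⟩) hne).symm
          _ ≤ ∑ T ∈ S, (t - (pathGraph' m).dist T ⟨x, hxm⟩) :=
              Finset.sum_le_sum_of_subset hsubset
  have h1 : broadcastNumber (pathGraph' m) t ≤ S.card :=
    Nat.sInf_le ⟨S, hS, rfl⟩
  have h2 : S.card ≤ m / (2 * (t - 1)) + 1 :=
    le_trans (Finset.card_image_le) (by simp)
  have h3 : (m + 2 * (t - 1)) / (2 * (t - 1)) = m / (2 * (t - 1)) + 1 :=
    Nat.add_div_right m hdpos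
  omega
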